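/- arXiv:2001.06095 — 5 statements merged into one kernel-verified Lean document; each statement's English description precedes it below -/
import Mathlib

section
/- Let A be an n×n real matrix all of whose principal minors are positive (a P-matrix). Then for every nonzero vector x ∈ ℝⁿ there exists an index i such that x_i · (Ax)_i > 0. -/
/-!
Suppose `x ≠ 0` and `x i * (A x) i ≤ 0` for all `i`. On the support `K` of `x` put
`d i = -(A x) i / x i ≥ 0`; then `(A[K] + diag d) x|K = 0`, so `A[K] + diag d` is singular.
But adding a nonnegative diagonal to a P-matrix keeps its determinant positive: the determinant
is affine in each diagonal entry, `det (M + c • E i i) = det M + c * det M[≠ i]`, and both terms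
are handled by induction on the number of nonzero entries of `d`, since the principal
submatrices of a P-matrix are again P-matrices.
-/

/-- `A` is a P-matrix: every principal minor (determinant of the submatrix keeping
rows and columns indexed by a nonempty subset `K`) is positive. -/
def IsPMatrix {n : ℕ} (A : Matrix (Fin n) (Fin n) ℝ) : Prop :=
  ∀ K : Finset (Fin n), K.Nonempty →
    0 < (A.submatrix (fun i : {a // a ∈ K} => (i : Fin n))
          (fun i : {a // a ∈ K} => (i : Fin n))).det

open Finset

namespace Matrix

section CommRing

variable {m R : Type*} [Fintype m] [DecidableEq m] [CommRing R]

theorem det_updateCol_single_self (M : Matrix m m R) (i : m) :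
    (M.updateCol i (Pi.single i 1)).det
      = (M.submatrix ((↑) : {j // j ≠ i} → m) (↑)).det := by
  -- column `i` is `Pi.single i 1`: block triangular, with corner block `(1)` at `i`
  have : Subsingleton {a // ¬a ≠ i} :=
    ⟨fun a b => Subtype.ext ((not_not.1 a.2).trans (not_not.1 b.2).symm)⟩
  have hcorner : (toSquareBlockProp (M.updateCol i (Pi.single i 1)) (¬· ≠ i)).det = 1 := by
    rw [det_eq_elem_of_subsingleton _ ⟨i, not_not.2 rfl⟩]
    simp [toSquareBlockProp_def]
  rw [twoBlockTriangular_det' _ (· ≠ i), hcorner, mul_one]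
  · congr 1
    ext a b
    exact updateCol_ne b.2
  · intro a ha j hj
    simp_all

theorem det_add_diagonal_single (M : Matrix m m R) (i : m) (c : R) :
    (M + diagonal (Pi.single i c)).det
      = M.det + c * (M.submatrix ((↑) : {j // j ≠ i} → m) (↑)).det := by
  have hcol : M + diagonal (Pi.single i c) = M.updateCol i (M.col i + c • Pi.single i 1) := by
    ext a b
    rcases eq_or_ne b i with rfl | hb
    · by_cases ha : a = b <;> simp [ha]
    · rcases eq_or_ne a b with rfl | hab <;> simp [*]
  rw [hcol, det_updateCol_add, det_updateCol_smul, det_updateCol_single_self]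
  rw [show M.col i = fun j => M j i from rfl, updateCol_eq_self]

end CommRing

section Ordered

variable {m R : Type*} [DecidableEq m]

def HasPosPrincipalMinors [CommRing R] [PartialOrder R] (B : Matrix m m R) : Prop :=
  ∀ K : Finset m, K.Nonempty → 0 < (B.submatrix (Subtype.val : K → m) Subtype.val).det

namespace HasPosPrincipalMinors

variable [CommRing R] [PartialOrder R] {B : Matrix m m R}

theorem submatrix {m' : Type*} [DecidableEq m'] (hB : B.HasPosPrincipalMinors)
    {f : m' → m} (hf : f.Injective) : (B.submatrix f f).HasPosPrincipalMinors := by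
  intro K hK
  let e := K.equivMap ⟨f, hf⟩
  have : (B.submatrix f f).submatrix (Subtype.val : K → m') Subtype.val
      = (B.submatrix (Subtype.val : K.map ⟨f, hf⟩ → m) Subtype.val).submatrix e e := rfl
  rw [this, det_submatrix_equiv_self]
  exact hB _ hK.map

variable [Fintype m] [IsStrictOrderedRing R]

theorem det_pos (hB : B.HasPosPrincipalMinors) : 0 < B.det := by
  cases isEmpty_or_nonempty m
  · simp
  · let e : (univ : Finset m) ≃ m := Equiv.subtypeUnivEquiv mem_univ
    rw [← det_submatrix_equiv_self e]
    exact hB univ univ_nonempty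

theorem det_add_diagonal_pos (hB : B.HasPosPrincipalMinors) {d : m → R} (hd : 0 ≤ d) :
    0 < (B + diagonal d).det := by
  classical
  induction hk : #{i | d i ≠ 0} using Nat.strong_induction_on generalizing m with
  | _ k ih =>
  by_cases hd0 : d = 0
  · simpa [hd0] using hB.det_pos
  obtain ⟨i, hi⟩ := Function.ne_iff.1 hd0
  set d' := Function.update d i 0
  have hd' : 0 ≤ d' := by
    intro j
    rcases eq_or_ne j i with rfl | hj
    · simp [d']
    · simpa [d', hj] using hd j
  have hsupp : #{j | d' j ≠ 0} < k := by
    have : ({j | d' j ≠ 0} : Finset m) = ({j | d j ≠ 0} : Finset m).erase i := by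
      ext j; by_cases hj : j = i <;> simp [d', hj]
    rw [← hk, this]
    exact card_erase_lt_of_mem (by simpa using hi)
  have hsplit : diagonal d = diagonal d' + diagonal (Pi.single i (d i)) := by
    rw [diagonal_add]
    congr 1; ext j; by_cases hj : j = i <;> simp [d', hj]
  have hminor : 0 < ((B + diagonal d').submatrix ((↑) : {j // j ≠ i} → m) (↑)).det := by
    have : (B + diagonal d').submatrix ((↑) : {j // j ≠ i} → m) (↑)
        = B.submatrix (↑) (↑) + diagonal (d' ∘ (↑)) := by
      rw [← submatrix_diagonal _ _ Subtype.val_injective]; rfl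
    rw [this]
    refine ih _ (lt_of_le_of_lt ?_ hsupp) (hB.submatrix Subtype.val_injective) (hd' ·) rfl
    exact card_le_card_of_injOn Subtype.val (by simp [Set.MapsTo]) Subtype.val_injective.injOn
  rw [hsplit, ← add_assoc, det_add_diagonal_single]
  exact add_pos_of_pos_of_nonneg (ih _ hsupp hB hd' rfl) (mul_nonneg (hd i) hminor.le)

end HasPosPrincipalMinors

end Ordered

theorem submatrix_mulVec_comp_val_of_forall_notMem {l l' m R : Type*} [Fintype m]
    [NonUnitalNonAssocSemiring R] (A : Matrix l m R) (f : l' → l) {K : Finset m} {x : m → R}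
    (hx : ∀ i ∉ K, x i = 0) :
    A.submatrix f (Subtype.val : K → m) *ᵥ (x ∘ Subtype.val) = (A *ᵥ x) ∘ f := by
  ext j
  simp only [mulVec, dotProduct, submatrix_apply, Function.comp_apply]
  rw [sum_coe_sort K fun k => A (f j) k * x k]
  exact sum_subset (subset_univ K) fun k _ hk => by simp [hx k hk]

namespace HasPosPrincipalMinors

variable {m R : Type*} [Fintype m] [DecidableEq m] [Field R] [LinearOrder R]
  [IsStrictOrderedRing R] {B : Matrix m m R}

theorem exists_pos_mul_mulVec_of_forall_ne_zero [Nonempty m] (hB : B.HasPosPrincipalMinors)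
    {y : m → R} (hy : ∀ i, y i ≠ 0) : ∃ i, 0 < y i * (B *ᵥ y) i := by
  by_contra! hrev
  set d : m → R := fun j => -(B *ᵥ y) j / y j
  have hd : 0 ≤ d := fun j => by
    have : d j = -(y j * (B *ᵥ y) j) / y j ^ 2 := by
      simp only [d]
      field_simp
    exact this ▸ div_nonneg (neg_nonneg.2 (hrev j)) (sq_nonneg _)
  have hker : (B + diagonal d) *ᵥ y = 0 := by
    ext j
    simp [add_mulVec, mulVec_diagonal, d, div_mul_cancel₀ _ (hy j)]
  refine (hB.det_add_diagonal_pos hd).ne' (exists_mulVec_eq_zero_iff.1 ⟨y, ?_, hker⟩)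
  exact fun h => hy (Classical.arbitrary m) (congrFun h _)

theorem exists_pos_mul_mulVec (hB : B.HasPosPrincipalMinors) {x : m → R} (hx : x ≠ 0) :
    ∃ i, 0 < x i * (B *ᵥ x) i := by
  set K : Finset m := {i | x i ≠ 0}
  obtain ⟨i, hi⟩ := Function.ne_iff.1 hx
  have : Nonempty K := ⟨⟨i, mem_filter.2 ⟨mem_univ i, hi⟩⟩⟩
  have hK : ∀ j : K, x j ≠ 0 := fun j => (mem_filter.1 j.2).2
  obtain ⟨j, hj⟩ := (hB.submatrix (f := (Subtype.val : K → m)) Subtype.val_injective)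
    |>.exists_pos_mul_mulVec_of_forall_ne_zero (y := x ∘ Subtype.val) hK
  refine ⟨j, ?_⟩
  rwa [submatrix_mulVec_comp_val_of_forall_notMem B _ fun i hi => by simpa [K] using hi] at hj

end HasPosPrincipalMinors

end Matrix

theorem pmatrix_reverses_no_sign {n : ℕ} (A : Matrix (Fin n) (Fin n) ℝ)
    (hA : IsPMatrix A) :
    ∀ x : Fin n → ℝ, x ≠ 0 → ∃ i : Fin n, 0 < x i * A.mulVec x i :=
  fun _ hx => Matrix.HasPosPrincipalMinors.exists_pos_mul_mulVec hA hx
end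

section
/- Let A be an n×n real matrix such that for every nonzero vector x ∈ ℝⁿ there exists an index i with x_i · (Ax)_i > 0. Then every principal minor of A is positive, i.e., A is a P-matrix. -/
namespace Matrix

variable {m n : Type*} [Fintype m] [Fintype n]

def NoSignReversal (A : Matrix n n ℝ) : Prop :=
  ∀ x : n → ℝ, x ≠ 0 → ∃ i, 0 < x i * (A *ᵥ x) i

theorem submatrix_mulVec_of_injective (A : Matrix n n ℝ) {e : m → n}
    (he : Function.Injective e) (y : m → ℝ) :
    A.submatrix e e *ᵥ y = (A *ᵥ Function.extend e y 0) ∘ e := by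
  ext k
  refine Fintype.sum_of_injective e he _ _ (fun j hj => ?_) (fun j => ?_)
  · rw [Function.extend_apply' _ _ _ (by simpa using hj), Pi.zero_apply, mul_zero]
  · simp only [submatrix_apply, he.extend_apply]

theorem NoSignReversal.submatrix {A : Matrix n n ℝ} (hA : A.NoSignReversal) {e : m → n}
    (he : Function.Injective e) : (A.submatrix e e).NoSignReversal := by
  intro y hy
  have hx : Function.extend e y 0 ≠ 0 := fun h =>
    hy (funext fun k => by simpa [he.extend_apply] using congrFun h (e k))
  obtain ⟨i, hi⟩ := hA _ hx
  have hi_range : ∃ k, e k = i := by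
    by_contra hi_range
    simp [Function.extend_apply' _ _ _ hi_range] at hi
  obtain ⟨k, rfl⟩ := hi_range
  refine ⟨k, ?_⟩
  rwa [submatrix_mulVec_of_injective A he, Function.comp_apply, ← he.extend_apply y 0 k]

theorem NoSignReversal.det_ne_zero [DecidableEq n] {A : Matrix n n ℝ} (hA : A.NoSignReversal) :
    A.det ≠ 0 := by
  intro h
  obtain ⟨x, hx, hAx⟩ := exists_mulVec_eq_zero_iff.2 h
  obtain ⟨i, hi⟩ := hA x hx
  simp [hAx] at hi

theorem NoSignReversal.smul_add_one_sub_smul_one [DecidableEq n] {A : Matrix n n ℝ}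
    (hA : A.NoSignReversal) {t : ℝ} (ht : t ∈ Set.Icc (0 : ℝ) 1) :
    (t • A + (1 - t) • (1 : Matrix n n ℝ)).NoSignReversal := by
  intro x hx
  obtain ⟨i, hi⟩ := hA x hx
  have hxi : x i ≠ 0 := by
    rintro h
    simp [h] at hi
  refine ⟨i, ?_⟩
  have hsq : 0 < x i * x i := mul_self_pos.2 hxi
  have hexpand : x i * ((t • A + (1 - t) • (1 : Matrix n n ℝ)) *ᵥ x) i =
      t * (x i * (A *ᵥ x) i) + (1 - t) * (x i * x i) := by
    simp only [add_mulVec, smul_mulVec, one_mulVec, Pi.add_apply, Pi.smul_apply, smul_eq_mul]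
    ring
  rw [hexpand]
  rcases ht.1.eq_or_lt with rfl | ht0
  · simpa using hsq
  · nlinarith [mul_nonneg (sub_nonneg.2 ht.2) hsq.le, mul_pos ht0 hi]

theorem NoSignReversal.det_pos [DecidableEq n] {A : Matrix n n ℝ} (hA : A.NoSignReversal) :
    0 < A.det := by
  set f : ℝ → ℝ := fun t => (t • A + (1 - t) • (1 : Matrix n n ℝ)).det
  have hf : Continuous f := by
    apply Continuous.matrix_det
    fun_prop
  have hf_ne : ∀ t ∈ Set.Icc (0 : ℝ) 1, f t ≠ 0 := fun t ht =>
    (hA.smul_add_one_sub_smul_one ht).det_ne_zero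
  have hf1 : f 1 = A.det := by simp [f]
  by_contra! hle
  have hzero : (0 : ℝ) ∈ Set.Icc (f 1) (f 0) := ⟨hf1 ▸ hle, by simp [f]⟩
  obtain ⟨c, hc, hfc⟩ := intermediate_value_Icc' zero_le_one hf.continuousOn hzero
  exact hf_ne c hc hfc

end Matrix

theorem sign_reversal_implies_pmatrix {n : ℕ} (A : Matrix (Fin n) (Fin n) ℝ)
    (hA : ∀ x : Fin n → ℝ, x ≠ 0 → ∃ i : Fin n, 0 < x i * A.mulVec x i) :
    IsPMatrix A := fun _ _ =>
  (Matrix.NoSignReversal.submatrix hA Subtype.val_injective).det_pos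
end

section
/- If A is an n×n P-matrix, then there exists μ > 0 such that A − μI is also a P-matrix, where I is the n×n identity matrix. -/
open Filter Topology

theorem isOpen_setOf_isPMatrix (n : ℕ) :
    IsOpen {A : Matrix (Fin n) (Fin n) ℝ | IsPMatrix A} := by
  simp only [IsPMatrix, Set.ofPred_forall]
  refine isOpen_iInter_of_finite fun K => isOpen_iInter_of_finite fun _ => ?_
  exact isOpen_lt continuous_const
    ((continuous_id.matrix_submatrix _ _).matrix_det)

theorem pmatrix_sub_mu_id {n : ℕ} (A : Matrix (Fin n) (Fin n) ℝ)
    (hA : IsPMatrix A) :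
    ∃ μ : ℝ, 0 < μ ∧ IsPMatrix (A - μ • (1 : Matrix (Fin n) (Fin n) ℝ)) := by
  have hpath : Tendsto (fun μ : ℝ => A - μ • (1 : Matrix (Fin n) (Fin n) ℝ)) (𝓝[>] 0) (𝓝 A) :=
    ((continuous_const.sub (continuous_id.smul continuous_const)).tendsto' 0 A
      (by simp)).mono_left nhdsWithin_le_nhds
  obtain ⟨μ, hP, hμ⟩ :=
    ((hpath.eventually ((isOpen_setOf_isPMatrix n).mem_nhds hA)).and self_mem_nhdsWithin).exists
  exact ⟨μ, hμ, hP⟩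
end

section
/- If A is an n×n P-matrix and μ > 0 is such that A − μI is a P-matrix, then for every λ with 0 ≤ λ ≤ μ, the matrix A − λI is a P-matrix. -/
/-!
Writing `A - λ • 1 = (A - μ • 1) + (μ - λ) • 1`, it suffices that adding a nonnegative diagonal
`D = diagonal d` to a P-matrix `B` gives a P-matrix. Expanding the determinant multilinearly in
the rows, `det (B + D) = ∑ S, (∏ i ∉ S, d i) * det B[S, S]`: every term is nonnegative and the
term `S = univ` is `det B > 0`. Principal submatrices of `B + D` have the same shape, and their
principal minors are principal minors of `B`.
-/

open Matrix Finset

theorem Matrix.det_submatrix_submatrix_subtype_map {ι κ R : Type*} [DecidableEq ι] [DecidableEq κ]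
    [CommRing R] (B : Matrix ι ι R) (f : κ ↪ ι) (s : Finset κ) :
    ((B.submatrix f f).submatrix ((↑) : s → κ) (↑)).det =
      (B.submatrix ((↑) : s.map f → ι) (↑)).det := by
  rw [← det_submatrix_equiv_self (s.equivMap f)]
  rfl

section

variable {ι R : Type*} [Fintype ι] [DecidableEq ι]

theorem Matrix.det_add_diagonal_eq_sum [CommRing R] (B : Matrix ι ι R) (d : ι → R) :
    (B + diagonal d).det =
      ∑ s : Finset ι, (∏ i ∈ sᶜ, d i) * (B.submatrix ((↑) : s → ι) (↑)).det := by
  change detRowAlternating (B.row + (diagonal d).row) = _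
  rw [AlternatingMap.map_add_univ]
  refine sum_congr rfl fun s _ => ?_
  have hrows : s.piecewise B.row (diagonal d).row =
      fun i => (if i ∈ s then 1 else d i) • s.piecewise B.row (1 : Matrix ι ι R).row i := by
    funext i j
    by_cases hi : i ∈ s <;> simp [hi, Finset.piecewise, Matrix.row, diagonal_apply, one_apply]
  rw [hrows, AlternatingMap.map_smul_univ, ← det_piecewise_one_eq_submatrix_det, smul_eq_mul,
    prod_ite, prod_const_one, one_mul, compl_eq_univ_sdiff, ← filter_notMem_eq_sdiff]
  rfl

theorem Matrix.det_add_diagonal_pos [CommRing R] [LinearOrder R] [IsStrictOrderedRing R]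
    {B : Matrix ι ι R} (hB : ∀ s : Finset ι, 0 < (B.submatrix ((↑) : s → ι) (↑)).det)
    {d : ι → R} (hd : ∀ i, 0 ≤ d i) : 0 < (B + diagonal d).det := by
  rw [det_add_diagonal_eq_sum]
  refine lt_of_lt_of_le ?_ (single_le_sum (f := fun s : Finset ι =>
    (∏ i ∈ sᶜ, d i) * (B.submatrix ((↑) : s → ι) (↑)).det)
    (fun s _ => mul_nonneg (prod_nonneg fun i _ => hd i) (hB s).le) (mem_univ univ))
  simpa using hB univ

end

theorem isPMatrix_iff_forall_submatrix_det_pos {n : ℕ} (A : Matrix (Fin n) (Fin n) ℝ) :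
    IsPMatrix A ↔ ∀ K : Finset (Fin n), 0 < (A.submatrix ((↑) : K → Fin n) (↑)).det := by
  refine ⟨fun hA K => ?_, fun hA K _ => hA K⟩
  obtain rfl | hK := K.eq_empty_or_nonempty
  · simp
  · exact hA K hK

theorem IsPMatrix.add_diagonal {n : ℕ} {A : Matrix (Fin n) (Fin n) ℝ} (hA : IsPMatrix A)
    {d : Fin n → ℝ} (hd : ∀ i, 0 ≤ d i) : IsPMatrix (A + diagonal d) := by
  intro K _
  change 0 < ((A + diagonal d).submatrix ((↑) : K → Fin n) (↑)).det
  rw [submatrix_add, Pi.add_apply, Pi.add_apply, submatrix_diagonal _ _ Subtype.val_injective]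
  refine det_add_diagonal_pos (fun s => ?_) fun _ => hd _
  have hminor := (isPMatrix_iff_forall_submatrix_det_pos A).1 hA (s.map (Function.Embedding.subtype _))
  rwa [← det_submatrix_submatrix_subtype_map] at hminor

theorem pmatrix_sub_lambda_id_general {n : ℕ} (A : Matrix (Fin n) (Fin n) ℝ) (μ : ℝ)
    (hAμ : IsPMatrix (A - μ • (1 : Matrix (Fin n) (Fin n) ℝ))) :
    ∀ lam : ℝ, 0 ≤ lam → lam ≤ μ →
      IsPMatrix (A - lam • (1 : Matrix (Fin n) (Fin n) ℝ)) := by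
  intro lam _ hlam
  have hshift : A - lam • (1 : Matrix (Fin n) (Fin n) ℝ) =
      A - μ • 1 + diagonal fun _ => μ - lam := by
    rw [← smul_one_eq_diagonal, sub_smul]
    abel
  rw [hshift]
  exact hAμ.add_diagonal fun _ => sub_nonneg.2 hlam

theorem pmatrix_sub_lambda_id {n : ℕ} (A : Matrix (Fin n) (Fin n) ℝ) (μ : ℝ)
    (hμ : 0 < μ) (hA : IsPMatrix A)
    (hAμ : IsPMatrix (A - μ • (1 : Matrix (Fin n) (Fin n) ℝ))) :
    ∀ lam : ℝ, 0 ≤ lam → lam ≤ μ →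
      IsPMatrix (A - lam • (1 : Matrix (Fin n) (Fin n) ℝ)) :=
  pmatrix_sub_lambda_id_general A μ hAμ
end

section
/- Let a ≤ x in ℝⁿ (componentwise) and λ > 0. If G(y) := I(y) − λy is a P-function on a set containing a and x, and I(x) − I(a) ≤ λ(x − a) componentwise, then x = a. -/
theorem gale_nikaido_quantitative_general {n : ℕ} (lam : ℝ)
    (R : Set (Fin n → ℝ)) (I : (Fin n → ℝ) → (Fin n → ℝ))
    (hP : ∀ u ∈ R, ∀ v ∈ R, u ≠ v →
      ∃ k : Fin n, 0 < (u k - v k) * ((I u k - lam * u k) - (I v k - lam * v k)))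
    (a x : Fin n → ℝ) (ha : a ∈ R) (hx : x ∈ R)
    (hle : ∀ i, a i ≤ x i)
    (hIle : ∀ i, I x i - I a i ≤ lam * (x i - a i)) :
    x = a := by
  by_contra hne
  obtain ⟨k, hk⟩ := hP x hx a ha hne
  have hG : (x k - a k) * ((I x k - lam * x k) - (I a k - lam * a k)) ≤ 0 :=
    mul_nonpos_of_nonneg_of_nonpos (sub_nonneg.2 (hle k)) (by linarith [hIle k])
  exact hk.not_ge hG

/-- Quantitative Gale–Nikaido: if `G y = I y - lam • y` is a P-function on a set `R`
containing `a` and `x`, `a ≤ x` componentwise, and `I x - I a ≤ lam • (x - a)`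
componentwise, then `x = a`. -/
theorem gale_nikaido_quantitative {n : ℕ} (lam : ℝ) (hlam : 0 < lam)
    (R : Set (Fin n → ℝ)) (I : (Fin n → ℝ) → (Fin n → ℝ))
    (hP : ∀ u ∈ R, ∀ v ∈ R, u ≠ v →
      ∃ k : Fin n, 0 < (u k - v k) * ((I u k - lam * u k) - (I v k - lam * v k)))
    (a x : Fin n → ℝ) (ha : a ∈ R) (hx : x ∈ R)
    (hle : ∀ i, a i ≤ x i)
    (hIle : ∀ i, I x i - I a i ≤ lam * (x i - a i)) :
    x = a :=
  gale_nikaido_quantitative_general lam R I hP a x ha hx hle hIle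
end
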